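/- arXiv:1902.04789 — 4 statements merged into one kernel-verified Lean document; each statement's English description precedes it below -/
import Mathlib

section
/- Let a finite set C of replicas be partitioned into pairwise disjoint blocks C_d indexed by a nonempty finite set D of data centres, and let W, R ⊆ C. Let q, q' be positive reals with q + q' ≥ 1. If for every d ∈ D one has q·|C_d| < |W ∩ C_d| and q'·|C_d| < |R ∩ C_d|, then W ∩ R is nonempty. In other words, a write quorum complying with Each_Quorum(q) and a read quorum complying with Each_Quorum(q') with q + q' ≥ 1 always share at least one replica. -/
/-! Pick any data centre `d`. Since `q + q' ≥ 1`, the two strict quorum bounds at `d` add up to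
`|C_d| < |W ∩ C_d| + |R ∩ C_d|`, so by pigeonhole the two subsets of `C_d` meet. -/

open Finset

lemma lt_add_of_mul_lt_of_mul_lt {x a b q q' : ℝ} (hx : 0 ≤ x) (hqq' : 1 ≤ q + q')
    (ha : q * x < a) (hb : q' * x < b) : x < a + b := by
  nlinarith

theorem Finset.inter_nonempty_of_quorums_in_block {α : Type*} [DecidableEq α]
    {s W R : Finset α} {q q' : ℝ} (hqq' : 1 ≤ q + q')
    (hW : q * (#s : ℝ) < #(W ∩ s)) (hR : q' * (#s : ℝ) < #(R ∩ s)) :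
    (W ∩ R).Nonempty := by
  have hcard : #s < #(W ∩ s) + #(R ∩ s) := by
    exact_mod_cast lt_add_of_mul_lt_of_mul_lt (Nat.cast_nonneg _) hqq' hW hR
  exact (inter_nonempty_of_card_lt_card_add_card inter_subset_right inter_subset_right
    hcard).mono (inter_subset_inter inter_subset_left inter_subset_left)

theorem each_quorum_intersect_general {α ι : Type*} [DecidableEq α]
    (D : Finset ι) (hD : D.Nonempty) (Cd : ι → Finset α)
    (W R : Finset α)
    (q q' : ℝ) (hqq' : q + q' ≥ 1)
    (hWq : ∀ d ∈ D, q * ((Cd d).card : ℝ) < ((W ∩ Cd d).card : ℝ))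
    (hRq : ∀ d ∈ D, q' * ((Cd d).card : ℝ) < ((R ∩ Cd d).card : ℝ)) :
    (W ∩ R).Nonempty := by
  obtain ⟨d, hd⟩ := hD
  exact inter_nonempty_of_quorums_in_block hqq' (hWq d hd) (hRq d hd)

/-- An `Each_Quorum(q)` write set and an `Each_Quorum(q')` read set with
`q + q' ≥ 1` always share at least one replica. -/
theorem each_quorum_intersect {α ι : Type*} [DecidableEq α]
    (D : Finset ι) (hD : D.Nonempty) (Cd : ι → Finset α)
    (hdisj : ∀ d ∈ D, ∀ d' ∈ D, d ≠ d' → Disjoint (Cd d) (Cd d'))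
    (C : Finset α) (hC : C = D.biUnion Cd)
    (W R : Finset α) (hW : W ⊆ C) (hR : R ⊆ C)
    (q q' : ℝ) (hq : 0 < q) (hq' : 0 < q') (hqq' : q + q' ≥ 1)
    (hWq : ∀ d ∈ D, q * ((Cd d).card : ℝ) < ((W ∩ Cd d).card : ℝ))
    (hRq : ∀ d ∈ D, q' * ((Cd d).card : ℝ) < ((R ∩ Cd d).card : ℝ)) :
    (W ∩ R).Nonempty :=
  each_quorum_intersect_general D hD Cd W R q q' hqq' hWq hRq
end

section
/- Let a finite set C of replicas be partitioned into pairwise disjoint blocks C_d indexed by a nonempty finite set D, let W, R ⊆ C, and let q, q' be positive reals with q + q' ≥ 1. If q·|C_d| < |W ∩ C_d| for every d ∈ D (W complies with Each_Quorum(q)) and q'·|C| < |R| (R complies with Quorum(q')), then W ∩ R is nonempty. Thus the mixed combination of a write-policy Each_Quorum(q) with a read-policy Quorum(q'), q + q' ≥ 1, guarantees a common replica. -/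
/-!
Adding the per-data-centre bounds over the partition gives `q|C| ≤ |W ∩ C|`. If `W ∩ R` were
empty, `W ∩ C` and `R` would be disjoint subsets of `C`, whence
`|C| ≤ (q + q')|C| < |W ∩ C| + |R| ≤ |C|`.
-/

open Finset

theorem mul_card_biUnion_le_card_inter {α ι : Type*} [DecidableEq α] {D : Finset ι}
    {Cd : ι → Finset α} (hdisj : (D : Set ι).PairwiseDisjoint Cd) {W : Finset α} {q : ℝ}
    (hWq : ∀ d ∈ D, q * ((Cd d).card : ℝ) ≤ ((W ∩ Cd d).card : ℝ)) :
    q * ((D.biUnion Cd).card : ℝ) ≤ ((W ∩ D.biUnion Cd).card : ℝ) := by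
  have hdisjW : (D : Set ι).PairwiseDisjoint fun d => W ∩ Cd d :=
    hdisj.mono fun _ => inter_subset_right
  rw [inter_biUnion, card_biUnion hdisj, card_biUnion hdisjW]
  push_cast
  rw [mul_sum]
  exact sum_le_sum hWq

theorem inter_nonempty_of_mul_card_lt {α : Type*} [DecidableEq α] {A B C : Finset α}
    (hA : A ⊆ C) (hB : B ⊆ C) {q q' : ℝ} (hqq' : 1 ≤ q + q')
    (hAq : q * (C.card : ℝ) ≤ (A.card : ℝ)) (hBq : q' * (C.card : ℝ) < (B.card : ℝ)) :
    (A ∩ B).Nonempty := by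
  by_contra h
  have hAB : Disjoint A B := disjoint_iff_inter_eq_empty.mpr (not_nonempty_iff_eq_empty.mp h)
  have hcard : (A.card : ℝ) + B.card ≤ C.card := by
    exact_mod_cast card_union_of_disjoint hAB ▸ card_le_card (union_subset hA hB)
  have hCC : (C.card : ℝ) < C.card :=
    calc (C.card : ℝ) ≤ (q + q') * C.card := le_mul_of_one_le_left (Nat.cast_nonneg _) hqq'
      _ < A.card + B.card := by linarith
      _ ≤ C.card := hcard
  exact hCC.false

theorem each_quorum_quorum_intersect_general {α ι : Type*} [DecidableEq α]
    (D : Finset ι) (Cd : ι → Finset α)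
    (hdisj : ∀ d ∈ D, ∀ d' ∈ D, d ≠ d' → Disjoint (Cd d) (Cd d'))
    (C : Finset α) (hC : C = D.biUnion Cd)
    (W R : Finset α) (hR : R ⊆ C)
    (q q' : ℝ) (hqq' : q + q' ≥ 1)
    (hWq : ∀ d ∈ D, q * ((Cd d).card : ℝ) < ((W ∩ Cd d).card : ℝ))
    (hRq : q' * (C.card : ℝ) < (R.card : ℝ)) :
    (W ∩ R).Nonempty := by
  subst hC
  have hWC := mul_card_biUnion_le_card_inter hdisj fun d hd => (hWq d hd).le
  have hWCR := inter_nonempty_of_mul_card_lt inter_subset_right hR hqq' hWC hRq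
  exact hWCR.mono (inter_subset_inter_right inter_subset_left)

/-- A write set complying with `Each_Quorum(q)` and a read set complying with
`Quorum(q')`, where `q + q' ≥ 1`, always share at least one replica. -/
theorem each_quorum_quorum_intersect {α ι : Type*} [DecidableEq α]
    (D : Finset ι) (hD : D.Nonempty) (Cd : ι → Finset α)
    (hdisj : ∀ d ∈ D, ∀ d' ∈ D, d ≠ d' → Disjoint (Cd d) (Cd d'))
    (C : Finset α) (hC : C = D.biUnion Cd)
    (W R : Finset α) (hW : W ⊆ C) (hR : R ⊆ C)
    (q q' : ℝ) (hq : 0 < q) (hq' : 0 < q') (hqq' : q + q' ≥ 1)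
    (hWq : ∀ d ∈ D, q * ((Cd d).card : ℝ) < ((W ∩ Cd d).card : ℝ))
    (hRq : q' * (C.card : ℝ) < (R.card : ℝ)) :
    (W ∩ R).Nonempty :=
  each_quorum_quorum_intersect_general D Cd hdisj C hC W R hR q q' hqq' hWq hRq
end

section
/- Let C be a finite set of replicas and f a function assigning to each replica c ∈ C a pair f(c) = (value, timestamp), with timestamps from a linear order. Let q, q' be positive reals with q + q' ≥ 1, and let W, R ⊆ C with q·|C| < |W| and q'·|C| < |R|. Suppose every replica w ∈ W satisfies f(w) = (v, t), and for every replica c ∈ C the timestamp of f(c) is ≤ t and, if it equals t, then the value of f(c) is v. Then every replica r ∈ R whose timestamp is maximal within R holds the value v. In other words, after a write of value v with timestamp t has succeeded on a Quorum(q) write set, any read complying with Quorum(q') with q + q' ≥ 1 that returns the value with the latest timestamp among the accessed replicas returns v. -/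
/-! Since `q + q' ≥ 1`, the write set and the read set together have more than `|C|` elements,
so they share a replica `w`. It carries timestamp `t`, which bounds every timestamp; hence a
replica of maximal timestamp in `R` has timestamp exactly `t`, and timestamp `t` forces value `v`. -/

open Finset

section Quorum

variable {α : Type*} {C W R : Finset α} {q q' : ℝ}

theorem card_lt_card_add_card_of_quorums (hqq' : q + q' ≥ 1)
    (hWq : q * (#C : ℝ) < #W) (hRq : q' * (#C : ℝ) < #R) : #C < #W + #R := by
  have hC : (#C : ℝ) ≤ (q + q') * #C := le_mul_of_one_le_left (Nat.cast_nonneg _) hqq'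
  exact_mod_cast (by linarith : (#C : ℝ) < #W + #R)

theorem exists_mem_quorums (hW : W ⊆ C) (hR : R ⊆ C) (hqq' : q + q' ≥ 1)
    (hWq : q * (#C : ℝ) < #W) (hRq : q' * (#C : ℝ) < #R) : ∃ w ∈ W, w ∈ R := by
  classical
  obtain ⟨w, hw⟩ := inter_nonempty_of_card_lt_card_add_card hW hR
    (card_lt_card_add_card_of_quorums hqq' hWq hRq)
  exact ⟨w, mem_of_mem_inter_left hw, mem_of_mem_inter_right hw⟩

end Quorum

theorem fst_eq_of_forall_snd_le {α V T : Type*} [LinearOrder T] {C R : Finset α}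
    {f : α → V × T} {v : V} {t : T} {w r : α} (hR : R ⊆ C)
    (hmax : ∀ c ∈ C, (f c).2 ≤ t) (hval : ∀ c ∈ C, (f c).2 = t → (f c).1 = v)
    (hw : w ∈ R) (hwt : (f w).2 = t) (hr : r ∈ R) (hrmax : ∀ r' ∈ R, (f r').2 ≤ (f r).2) :
    (f r).1 = v :=
  hval r (hR hr) <| (hmax r (hR hr)).antisymm (hwt ▸ hrmax w hw)

theorem quorum_read_returns_written_value_general {α V T : Type*}
    [LinearOrder T]
    (C : Finset α) (f : α → V × T) (v : V) (t : T)
    (q q' : ℝ) (hqq' : q + q' ≥ 1)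
    (W R : Finset α) (hW : W ⊆ C) (hR : R ⊆ C)
    (hWq : q * (C.card : ℝ) < (W.card : ℝ))
    (hRq : q' * (C.card : ℝ) < (R.card : ℝ))
    (hwrite : ∀ w ∈ W, f w = (v, t))
    (hmax : ∀ c ∈ C, (f c).2 ≤ t)
    (hval : ∀ c ∈ C, (f c).2 = t → (f c).1 = v) :
    ∀ r ∈ R, (∀ r' ∈ R, (f r').2 ≤ (f r).2) → (f r).1 = v := by
  intro r hr hrmax
  obtain ⟨w, hwW, hwR⟩ := exists_mem_quorums hW hR hqq' hWq hRq
  exact fst_eq_of_forall_snd_le hR hmax hval hwR (by rw [hwrite w hwW]) hr hrmax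

/-- After a write of `(v, t)` has succeeded on a `Quorum(q)` write set `W`,
any read from a `Quorum(q')` read set `R` with `q + q' ≥ 1` that returns the
value with the latest timestamp among the accessed replicas returns `v`. -/
theorem quorum_read_returns_written_value {α V T : Type*} [DecidableEq α]
    [LinearOrder T]
    (C : Finset α) (f : α → V × T) (v : V) (t : T)
    (q q' : ℝ) (hq : 0 < q) (hq' : 0 < q') (hqq' : q + q' ≥ 1)
    (W R : Finset α) (hW : W ⊆ C) (hR : R ⊆ C)
    (hWq : q * (C.card : ℝ) < (W.card : ℝ))
    (hRq : q' * (C.card : ℝ) < (R.card : ℝ))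
    (hwrite : ∀ w ∈ W, f w = (v, t))
    (hmax : ∀ c ∈ C, (f c).2 ≤ t)
    (hval : ∀ c ∈ C, (f c).2 = t → (f c).1 = v) :
    ∀ r ∈ R, (∀ r' ∈ R, (f r').2 ≤ (f r).2) → (f r).1 = v :=
  quorum_read_returns_written_value_general C f v t q q' hqq' W R hW hR hWq hRq hwrite hmax hval
end

section
/- Let timestamps come from a linear order, and define the conditional-update step on pairs (value, timestamp) by step(cur, new) = new if the timestamp of cur is strictly smaller than the timestamp of new, and step(cur, new) = cur otherwise. Let p₀ be an initial pair and l a finite list of pairs such that the timestamps of the elements of p₀ :: l are pairwise distinct. Then for every permutation l' of l, folding step over l' starting from p₀ yields the same result as folding step over l starting from p₀; namely, both equal the unique element of p₀ :: l with maximal timestamp. In other words, under distinct timestamps the final replica value is independent of the order in which the writes arrive. -/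
/-- The conditional update: a write `new` replaces the current pair `cur`
only if its timestamp is strictly larger. -/
def condStep {V T : Type*} [LinearOrder T] (cur new : V × T) : V × T :=
  if cur.2 < new.2 then new else cur

/-!
Each step keeps one of its two arguments and the larger of their timestamps, so the fold ends
at an element of `p₀ :: l` whose timestamp bounds all others. Permuting `l` does not change
`p₀ :: l` as a set, and with distinct timestamps there is only one element of maximal
timestamp, so both folds end at it.
-/

section condStep

variable {V T : Type*} [LinearOrder T]

theorem condStep_eq_or_eq (cur new : V × T) :
    condStep cur new = cur ∨ condStep cur new = new := by
  unfold condStep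
  split_ifs <;> simp

theorem condStep_snd (cur new : V × T) : (condStep cur new).2 = max cur.2 new.2 := by
  unfold condStep
  split_ifs with h
  · exact (max_eq_right h.le).symm
  · exact (max_eq_left (not_lt.mp h)).symm

theorem foldl_condStep_mem (p₀ : V × T) (l : List (V × T)) :
    l.foldl condStep p₀ ∈ p₀ :: l := by
  induction l generalizing p₀ with
  | nil => simp
  | cons a l ih =>
    rw [List.foldl_cons]
    rcases List.mem_cons.mp (ih (condStep p₀ a)) with h | h
    · rw [h]
      rcases condStep_eq_or_eq p₀ a with h' | h' <;> rw [h'] <;> simp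
    · simp [h]

theorem le_foldl_condStep_snd (p₀ : V × T) (l : List (V × T)) :
    ∀ p ∈ p₀ :: l, p.2 ≤ (l.foldl condStep p₀).2 := by
  induction l generalizing p₀ with
  | nil => simp
  | cons a l ih =>
    have hstep := ih (condStep p₀ a)
    have hle := hstep _ List.mem_cons_self
    rw [condStep_snd] at hle
    intro p hp
    rcases List.mem_cons.mp hp with rfl | hp
    · exact (le_max_left _ _).trans hle
    rcases List.mem_cons.mp hp with rfl | hp
    · exact (le_max_right _ _).trans hle
    · exact hstep p (List.mem_cons_of_mem _ hp)

theorem foldl_condStep_eq_of_mem_of_forall_le (p₀ : V × T) (l : List (V × T))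
    (hdist : (p₀ :: l).Pairwise (fun a b => a.2 ≠ b.2)) {q : V × T} (hq : q ∈ p₀ :: l)
    (hmax : ∀ p ∈ p₀ :: l, p.2 ≤ q.2) :
    l.foldl condStep p₀ = q :=
  List.inj_on_of_nodup_map (List.pairwise_map.mpr hdist) (foldl_condStep_mem p₀ l) hq
    (le_antisymm (hmax _ (foldl_condStep_mem p₀ l)) (le_foldl_condStep_snd p₀ l q hq))

end condStep

/-- Under pairwise distinct timestamps, the final replica value is independent
of the order in which the writes arrive: folding over any permutation of the
write list gives the same result, namely the unique element of `p₀ :: l` with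
maximal timestamp. -/
theorem foldl_condStep_perm_invariant {V T : Type*} [LinearOrder T]
    (p₀ : V × T) (l : List (V × T))
    (hdist : (p₀ :: l).Pairwise (fun a b => a.2 ≠ b.2)) :
    (∀ l' : List (V × T), l'.Perm l →
      l'.foldl condStep p₀ = l.foldl condStep p₀) ∧
    (l.foldl condStep p₀) ∈ p₀ :: l ∧
    ∀ p ∈ p₀ :: l, p.2 ≤ (l.foldl condStep p₀).2 := by
  refine ⟨fun l' hperm => ?_, foldl_condStep_mem p₀ l, le_foldl_condStep_snd p₀ l⟩
  have hperm₀ : (p₀ :: l').Perm (p₀ :: l) := hperm.cons p₀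
  have hdist' : (p₀ :: l').Pairwise (fun a b => a.2 ≠ b.2) :=
    (hperm₀.pairwise_iff fun h => h.symm).mpr hdist
  exact foldl_condStep_eq_of_mem_of_forall_le p₀ l' hdist'
    (hperm₀.mem_iff.mpr (foldl_condStep_mem p₀ l))
    fun p hp => le_foldl_condStep_snd p₀ l p (hperm₀.mem_iff.mp hp)
end
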